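/- Key martingale lemma for elementary stepwise processes: let (Q(t))_{t∈ℕ} be a K-valued process adapted to a filtration (𝔉_t) such that for every t, almost surely there exists a single player i with q_j(t+1) = q_j(t) for all j ≠ i (at most one player's strategy changes per step). Let F be the multilinear extension of φ. Then for every t, almost surely E[F(Q(t+1)) − F(Q(t)) | 𝔉_t] = Σ_{i=1}^n Σ_{ℓ=1}^{m_i} F(e_ℓ, Q_{-i}(t)) · E[q_{i,ℓ}(t+1) − q_{i,ℓ}(t) | 𝔉_t]. -/

import Mathlib

/-!
At most one player moves per step, so `Q(t+1)` differs from `Q(t)` only in some block `q_i`, in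
which `F` is affine: `F(Q(t+1)) − F(Q(t)) = Σ_ℓ F(e_ℓ, Q_{-i}(t)) Δq_{i,ℓ}`. Adding the vanishing
terms of the other players gives the double sum over `(i, ℓ)`, whose coefficients no longer depend
on the random mover `i`; they are `𝔉_t`-measurable and bounded, so they come out of the conditional
expectation.
-/

open Finset

/-- A point of the standard simplex in `ℝ^M`. -/
def IsSimplex {M : ℕ} (q : Fin M → ℝ) : Prop :=
  (∀ ℓ, 0 ≤ q ℓ) ∧ ∑ ℓ, q ℓ = 1

/-- A mixed profile: one mixed strategy per player. -/
def InK {n : ℕ} {m : Fin n → ℕ} (Q : ∀ i, Fin (m i) → ℝ) : Prop :=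
  ∀ i, IsSimplex (Q i)

/-- The `ℓ`-th unit vector `e_ℓ`. -/
def unitVec {M : ℕ} (ℓ : Fin M) : Fin M → ℝ := fun k => if k = ℓ then 1 else 0

/-- The multilinear (mixed) extension of a function on pure profiles:
`ū(Q) = Σ_s (Π_j q_{j, s_j}) c(s)`. -/
noncomputable def mixedExt {n : ℕ} {m : Fin n → ℕ} (c : (∀ j, Fin (m j)) → ℝ)
    (Q : ∀ i, Fin (m i) → ℝ) : ℝ :=
  ∑ s : ∀ j, Fin (m j), (∏ j, Q j (s j)) * c s

/-- Nash equilibrium: no player can decrease her expected cost by a unilateral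
(mixed) deviation. -/
def IsNash {n : ℕ} {m : Fin n → ℕ} (c : ∀ _i : Fin n, (∀ j, Fin (m j)) → ℝ)
    (Q : ∀ i, Fin (m i) → ℝ) : Prop :=
  ∀ i, ∀ q' : Fin (m i) → ℝ, IsSimplex q' →
    mixedExt (c i) Q ≤ mixedExt (c i) (Function.update Q i q')

/-- The multipopulation replicator vector field:
`G_{i,ℓ}(Q) = -p_i q_{i,ℓ} (ū_i(e_ℓ, Q_{-i}) - ū_i(q_i, Q_{-i}))`. -/
noncomputable def repl {n : ℕ} {m : Fin n → ℕ} (c : ∀ _i : Fin n, (∀ j, Fin (m j)) → ℝ)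
    (p : Fin n → ℝ) (Q : ∀ i, Fin (m i) → ℝ) (i : Fin n) (ℓ : Fin (m i)) : ℝ :=
  -(p i) * Q i ℓ *
    (mixedExt (c i) (Function.update Q i (unitVec ℓ)) - mixedExt (c i) Q)

open MeasureTheory

lemma IsSimplex.le_one {M : ℕ} {q : Fin M → ℝ} (hq : IsSimplex q) (ℓ : Fin M) : q ℓ ≤ 1 :=
  calc q ℓ ≤ ∑ k, q k := single_le_sum (fun k _ => hq.1 k) (mem_univ ℓ)
    _ = 1 := hq.2

lemma IsSimplex.abs_le_one {M : ℕ} {q : Fin M → ℝ} (hq : IsSimplex q) (ℓ : Fin M) :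
    |q ℓ| ≤ 1 := by
  rw [abs_of_nonneg (hq.1 ℓ)]
  exact hq.le_one ℓ

lemma isSimplex_unitVec {M : ℕ} (ℓ : Fin M) : IsSimplex (unitVec ℓ) :=
  ⟨fun k => by unfold unitVec; split_ifs <;> norm_num, by simp [unitVec]⟩

lemma InK.update {n : ℕ} {m : Fin n → ℕ} {Q : ∀ i, Fin (m i) → ℝ} (hQ : InK Q) (i : Fin n)
    {q : Fin (m i) → ℝ} (hq : IsSimplex q) : InK (Function.update Q i q) := by
  intro j
  rcases eq_or_ne j i with rfl | hj
  · rwa [Function.update_self]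
  · rw [Function.update_of_ne hj]
    exact hQ j

section MixedExt

variable {n : ℕ} {m : Fin n → ℕ}

lemma prod_update_apply (Q : ∀ i, Fin (m i) → ℝ) (i : Fin n) (v : Fin (m i) → ℝ)
    (s : ∀ j, Fin (m j)) :
    ∏ j, Function.update Q i v j (s j) = v (s i) * ∏ j ∈ univ.erase i, Q j (s j) := by
  rw [← mul_prod_erase univ _ (mem_univ i), Function.update_self]
  congr 1
  exact prod_congr rfl fun j hj => by rw [Function.update_of_ne (ne_of_mem_erase hj)]

lemma mixedExt_update (φ : (∀ j, Fin (m j)) → ℝ) (Q : ∀ i, Fin (m i) → ℝ) (i : Fin n)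
    (q : Fin (m i) → ℝ) :
    mixedExt φ (Function.update Q i q)
      = ∑ ℓ, q ℓ * mixedExt φ (Function.update Q i (unitVec ℓ)) := by
  unfold mixedExt
  simp_rw [mul_sum, prod_update_apply]
  rw [sum_comm]
  refine sum_congr rfl fun s _ => ?_
  simp [unitVec, mul_ite, ite_mul, mul_comm, mul_left_comm]

lemma mixedExt_sub_of_eq_of_ne (φ : (∀ j, Fin (m j)) → ℝ) {Q Q' : ∀ i, Fin (m i) → ℝ}
    {i : Fin n} (h : ∀ j, j ≠ i → Q' j = Q j) :
    mixedExt φ Q' - mixedExt φ Q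
      = ∑ ℓ, mixedExt φ (Function.update Q i (unitVec ℓ)) * (Q' i ℓ - Q i ℓ) := by
  have hQ' : Q' = Function.update Q i (Q' i) := Function.eq_update_iff.2 ⟨rfl, h⟩
  conv_lhs => rw [hQ', mixedExt_update, ← Function.update_eq_self i Q, mixedExt_update,
    Function.update_eq_self, ← sum_sub_distrib]
  exact sum_congr rfl fun ℓ _ => by ring

lemma mixedExt_sub_eq_sum_of_exists_eq_of_ne (φ : (∀ j, Fin (m j)) → ℝ)
    {Q Q' : ∀ i, Fin (m i) → ℝ} (h : ∃ i, ∀ j, j ≠ i → Q' j = Q j) :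
    mixedExt φ Q' - mixedExt φ Q
      = ∑ i, ∑ ℓ, mixedExt φ (Function.update Q i (unitVec ℓ)) * (Q' i ℓ - Q i ℓ) := by
  obtain ⟨i, hi⟩ := h
  rw [mixedExt_sub_of_eq_of_ne φ hi, sum_eq_single i]
  · intro j _ hj
    simp [hi j hj]
  · simp

lemma abs_mixedExt_le (φ : (∀ j, Fin (m j)) → ℝ) {Q : ∀ i, Fin (m i) → ℝ} (hQ : InK Q) :
    |mixedExt φ Q| ≤ ∑ s, |φ s| := by
  refine (abs_sum_le_sum_abs _ _).trans (sum_le_sum fun s _ => ?_)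
  rw [abs_mul, abs_prod]
  exact mul_le_of_le_one_left (abs_nonneg _)
    (prod_le_one (fun j _ => abs_nonneg _) fun j _ => (hQ j).abs_le_one (s j))

@[fun_prop]
lemma continuous_mixedExt (φ : (∀ j, Fin (m j)) → ℝ) : Continuous (mixedExt φ) := by
  unfold mixedExt
  fun_prop

end MixedExt

lemma condExp_sum_mul_of_stronglyMeasurable {Ω ι : Type*} [Fintype ι] {m m0 : MeasurableSpace Ω}
    {μ : Measure Ω} {f g : ι → Ω → ℝ} {C : ℝ} (hm : m ≤ m0)
    (hf : ∀ i, StronglyMeasurable[m] (f i)) (hfC : ∀ i, ∀ᵐ ω ∂μ, ‖f i ω‖ ≤ C)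
    (hg : ∀ i, Integrable (g i) μ) :
    μ[fun ω => ∑ i, f i ω * g i ω | m] =ᵐ[μ] fun ω => ∑ i, f i ω * μ[g i | m] ω := by
  have hfg (i : ι) : Integrable (f i * g i) μ :=
    (hg i).bdd_mul ((hf i).mono hm).aestronglyMeasurable (hfC i)
  have hsum : (fun ω => ∑ i, f i ω * g i ω) = ∑ i, f i * g i := by
    ext ω
    simp [Finset.sum_apply]
  have hpull : ∀ᵐ ω ∂μ, ∀ i, μ[f i * g i | m] ω = (f i * μ[g i | m]) ω :=
    ae_all_iff.2 fun i => condExp_mul_of_stronglyMeasurable_left (hf i) (hfg i) (hg i)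
  rw [hsum]
  filter_upwards [condExp_finsetSum (s := univ) (fun i _ => hfg i) m, hpull] with ω hω hpull_ω
  simp only [hω, Finset.sum_apply, hpull_ω, Pi.mul_apply]

/-- key martingale lemma for elementary stepwise processes: if at
most one player's mixed strategy changes per step, then for the multilinear
extension `F` of `φ`,
`E[F(Q(t+1)) − F(Q(t)) | 𝔉_t] = Σ_{i,ℓ} F(e_ℓ, Q_{-i}(t)) E[Δq_{i,ℓ} | 𝔉_t]`. -/
theorem stepwise_multiaffine_drift {n : ℕ} {m : Fin n → ℕ}
    (φ : (∀ j, Fin (m j)) → ℝ)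
    {Ω : Type*} {m0 : MeasurableSpace Ω} (μ : Measure Ω) [IsProbabilityMeasure μ]
    (ℱ : Filtration ℕ m0)
    (Q : ℕ → Ω → ∀ i, Fin (m i) → ℝ)
    (hadapted : Adapted ℱ Q)
    (hK : ∀ t ω, InK (Q t ω))
    (hstep : ∀ t : ℕ, ∀ᵐ ω ∂μ, ∃ i : Fin n, ∀ j : Fin n, j ≠ i →
      Q (t + 1) ω j = Q t ω j) :
    ∀ t : ℕ,
      (μ[fun ω => mixedExt φ (Q (t + 1) ω) - mixedExt φ (Q t ω) | ℱ t]) =ᵐ[μ]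
        fun ω => ∑ i, ∑ ℓ,
          mixedExt φ (Function.update (Q t ω) i (unitVec ℓ)) *
            (μ[fun ω' => Q (t + 1) ω' i ℓ - Q t ω' i ℓ | ℱ t]) ω := by
  intro t
  have hcoord (u : ℕ) (p : Σ i, Fin (m i)) : Integrable (fun ω => Q u ω p.1 p.2) μ :=
    .of_bound ((hadapted u).mono (ℱ.le u) le_rfl).eval.eval.aestronglyMeasurable 1
      (ae_of_all μ fun ω => (hK u ω p.1).abs_le_one p.2)
  have hcoeff (p : Σ i, Fin (m i)) :
      StronglyMeasurable[ℱ t] fun ω => mixedExt φ (Function.update (Q t ω) p.1 (unitVec p.2)) :=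
    (by fun_prop : Continuous fun R : ∀ i, Fin (m i) → ℝ =>
      mixedExt φ (Function.update R p.1 (unitVec p.2))).comp_stronglyMeasurable
        (hadapted t).stronglyMeasurable
  have hdrift := condExp_sum_mul_of_stronglyMeasurable (ℱ.le t) hcoeff
    (fun p => ae_of_all μ fun ω => abs_mixedExt_le φ ((hK t ω).update p.1 (isSimplex_unitVec p.2)))
    (fun p => (hcoord (t + 1) p).sub (hcoord t p))
  simp only [Fintype.sum_sigma] at hdrift
  refine (condExp_congr_ae ?_).trans hdrift
  filter_upwards [hstep t] with ω hω
  exact mixedExt_sub_eq_sum_of_exists_eq_of_ne φ hω
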